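/- Let k be a field, n ≥ 1, and let v be a valuation on the formal power series ring k[[x_1, …, x_n]] with values in ℝ≥0 such that v(f) ≤ 1 for every f, and such that the values c_i = v(x_i) satisfy 0 < c_i < 1 and are multiplicatively rationally independent. Then the set of values {v(f) : f ∈ k[[x_1, …, x_n]], f ≠ 0} is exactly the multiplicative submonoid of ℝ≥0 generated by c_1, …, c_n. -/

import Mathlib

/-!
A nonzero monomial `a x^d` has value `c^d := ∏ cᵢ^dᵢ`, since constants are units and `v ≤ 1`
forces units to have value `1`. By rational independence distinct exponents give distinct
values, so a nonzero polynomial has the largest value among its monomials. A series all of whose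
terms have degree `≥ N` lies in the ideal generated by the monomials of degree `N`, hence has value
`≤ (max cᵢ)^N`, which tends to `0`. Truncating `f ≠ 0` at a high enough degree therefore changes
neither its value nor the fact that this value is some `c^d`.
-/

open MvPowerSeries

open scoped NNReal

theorem Finsupp.injective_prod_pow {ι G₀ : Type*} [Fintype ι] [CommGroupWithZero G₀]
    {c : ι → G₀} (hc : ∀ i, c i ≠ 0) (hind : ∀ m : ι → ℤ, ∏ i, c i ^ m i = 1 → m = 0) :
    Function.Injective fun d : ι →₀ ℕ => d.prod (c · ^ ·) := by
  intro d e hde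
  have hone : ∏ i, c i ^ ((d i : ℤ) - e i) = 1 := by
    simp_rw [zpow_sub₀ (hc _), zpow_natCast, Finset.prod_div_distrib]
    rw [← Finsupp.prod_fintype d _ fun _ => pow_zero _,
      ← Finsupp.prod_fintype e _ fun _ => pow_zero _]
    exact (div_eq_one_iff_eq (Finset.prod_ne_zero_iff.2 fun i _ => pow_ne_zero _ (hc i))).2 hde
  ext i
  simpa [sub_eq_zero] using congrFun (hind _ hone) i

namespace MvPowerSeries

theorem exists_eq_sum_monomial_mul_of_le_order {σ R : Type*} [Finite σ] [CommSemiring R]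
    {g : MvPowerSeries σ R} {N : ℕ} (hN : N ≤ g.order) :
    ∃ H : (σ →₀ ℕ) → MvPowerSeries σ R,
      g = ∑ e ∈ (Finsupp.finite_of_degree_eq N).toFinset, monomial e 1 * H e := by
  classical
  have hE : ∀ d : σ →₀ ℕ, ∃ e, N ≤ d.degree → e ≤ d ∧ e.degree = N := fun d =>
    if h : N ≤ d.degree then (Finsupp.exists_le_degree_eq d N h).imp fun _ he _ => he
    else ⟨0, fun h' => absurd h' h⟩
  choose E hE using hE
  -- the term `x^d` of `g` is charged to the monomial `x^(E d)` of degree `N` dividing it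
  let H : (σ →₀ ℕ) → MvPowerSeries σ R := fun e d =>
    if E (e + d) = e then coeff (e + d) g else 0
  have hH : ∀ e d, coeff d (H e) = if E (e + d) = e then coeff (e + d) g else 0 :=
    fun _ _ => rfl
  refine ⟨H, ?_⟩
  ext d
  have hterm : ∀ e, coeff d (monomial e 1 * H e) =
      if E d = e then (if e ≤ d then coeff d g else 0) else 0 := fun e => by
    by_cases hed : e ≤ d
    · rw [coeff_monomial_mul, if_pos hed, one_mul, hH, add_tsub_cancel_of_le hed]
      simp [hed]
    · rw [coeff_monomial_mul, if_neg hed]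
      simp [hed]
  simp_rw [map_sum, hterm, Finset.sum_ite_eq, Set.Finite.mem_toFinset]
  by_cases h : N ≤ d.degree
  · simp [hE d h]
  · simp [coeff_of_lt_order (lt_of_lt_of_le (by exact_mod_cast not_le.1 h) hN)]

section Valuation

variable {σ k Γ₀ : Type*} [Field k] [LinearOrderedCommGroupWithZero Γ₀]
  {v : Valuation (MvPowerSeries σ k) Γ₀}

theorem valuation_monomial (hle : ∀ f, v f ≤ 1) (d : σ →₀ ℕ) {a : k} (ha : a ≠ 0) :
    v (monomial d a) = d.prod fun i n => v (X i) ^ n := by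
  have hC : v (C a) = 1 := (Valuation.IsTrivialOn.of_le_one v fun _ => hle _).eq_one a ha
  simp [monomial_eq', hC, map_finsuppProd]

theorem valuation_coe_eq_sup' (hle : ∀ f, v f ≤ 1)
    (hinj : Function.Injective fun d : σ →₀ ℕ => d.prod fun i n => v (X i) ^ n)
    (p : MvPolynomial σ k) (hp : p.support.Nonempty) :
    v (p : MvPowerSeries σ k) = p.support.sup' hp fun d => d.prod fun i n => v (X i) ^ n := by
  classical
  obtain ⟨d₀, hd₀, hmax⟩ := Finset.exists_mem_eq_sup' hp fun d => d.prod fun i n => v (X i) ^ n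
  have hval : ∀ d ∈ p.support,
      v (MvPolynomial.coeToMvPowerSeries.ringHom (MvPolynomial.monomial d (p.coeff d))) =
        d.prod fun i n => v (X i) ^ n := fun d hd => by
    rw [MvPolynomial.coeToMvPowerSeries.ringHom_apply, MvPolynomial.coe_monomial,
      valuation_monomial hle d (MvPolynomial.mem_support_iff.1 hd)]
  conv_lhs => rw [p.as_sum]
  rw [hmax, ← MvPolynomial.coeToMvPowerSeries.ringHom_apply, map_sum, ← hval d₀ hd₀]
  refine Valuation.map_sum_eq_of_lt v hd₀ fun d hd => ?_
  obtain ⟨hd, hne⟩ := Finset.mem_sdiff.1 hd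
  rw [hval d hd, hval d₀ hd₀]
  exact (hmax ▸ Finset.le_sup' _ hd).lt_of_ne (hinj.ne (by simpa using hne))

theorem valuation_le_pow_of_le_order [Finite σ] (hle : ∀ f, v f ≤ 1) {r : Γ₀}
    (hr : ∀ i, v (X i) ≤ r) {g : MvPowerSeries σ k} {N : ℕ} (hN : N ≤ g.order) :
    v g ≤ r ^ N := by
  obtain ⟨H, rfl⟩ := exists_eq_sum_monomial_mul_of_le_order hN
  refine v.map_sum_le fun e he => ?_
  rw [map_mul, valuation_monomial hle e one_ne_zero]
  calc (e.prod fun i n => v (X i) ^ n) * v (H e)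
      ≤ e.prod fun i n => v (X i) ^ n := mul_le_of_le_one_right' (hle _)
    _ ≤ ∏ i ∈ e.support, r ^ e i := Finset.prod_le_prod' fun i _ => pow_le_pow_left' (hr i) _
    _ = r ^ N := by
      rw [Finset.prod_pow_eq_pow_sum, ← Finsupp.degree_apply, (Set.Finite.mem_toFinset _).1 he]

theorem valuation_sub_truncTotal_le [Finite σ] (hle : ∀ f, v f ≤ 1) {r : Γ₀}
    (hr : ∀ i, v (X i) ≤ r) (f : MvPowerSeries σ k) (N : ℕ) :
    v (f - truncTotal N f) ≤ r ^ N :=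
  valuation_le_pow_of_le_order hle hr <| nat_le_order fun d hd => by
    rw [map_sub, MvPolynomial.coeff_coe, coeff_truncTotal _ hd, sub_self]

end Valuation

theorem exists_valuation_eq_prod_pow {σ k : Type*} [Fintype σ] [Field k]
    {v : Valuation (MvPowerSeries σ k) ℝ≥0}
    (hle : ∀ f, v f ≤ 1) (hpos : ∀ i, 0 < v (X i)) (hlt : ∀ i, v (X i) < 1)
    (hinj : Function.Injective fun d : σ →₀ ℕ => d.prod fun i n => v (X i) ^ n)
    {f : MvPowerSeries σ k} (hf : f ≠ 0) :
    ∃ d : σ →₀ ℕ, v f = d.prod fun i n => v (X i) ^ n := by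
  obtain ⟨d₁, hd₁⟩ := (ne_zero_iff_exists_coeff_ne_zero f).1 hf
  set r := Finset.univ.sup fun i => v (X i)
  have hr : ∀ i, v (X i) ≤ r := fun i => Finset.le_sup (f := fun i => v (X i)) (Finset.mem_univ i)
  have hr1 : r < 1 := (Finset.sup_lt_iff zero_lt_one).2 fun i _ => hlt i
  obtain ⟨N, hN⟩ := exists_pow_lt_of_lt_one
    (Finset.prod_pos fun i _ => pow_pos (hpos i) (d₁ i)) hr1
  set p := truncTotal (max N (d₁.degree + 1)) f
  have hd₁p : d₁ ∈ p.support := by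
    rwa [MvPolynomial.mem_support_iff, coeff_truncTotal _ (by omega)]
  have hp := valuation_coe_eq_sup' hle hinj p ⟨d₁, hd₁p⟩
  have htail : v (f - p) < v p := calc
    v (f - p) ≤ r ^ max N (d₁.degree + 1) := valuation_sub_truncTotal_le hle hr f _
    _ ≤ r ^ N := pow_le_pow_of_le_one zero_le hr1.le (le_max_left _ _)
    _ < d₁.prod fun i n => v (X i) ^ n := hN
    _ ≤ v p := hp ▸ Finset.le_sup' (fun d => d.prod fun i n => v (X i) ^ n) hd₁p
  obtain ⟨d, -, hd⟩ :=
    Finset.exists_mem_eq_sup' ⟨d₁, hd₁p⟩ fun d => d.prod fun i n => v (X i) ^ n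
  refine ⟨d, ?_⟩
  rw [← add_sub_cancel (p : MvPowerSeries σ k) f, v.map_add_eq_of_lt_left htail, hp, hd]

end MvPowerSeries

theorem stmt_9_general {k : Type*} [Field k] (n : ℕ)
    (v : Valuation (MvPowerSeries (Fin n) k) NNReal)
    (hle : ∀ f : MvPowerSeries (Fin n) k, v f ≤ 1)
    (hpos : ∀ i : Fin n, 0 < v (MvPowerSeries.X i))
    (hlt : ∀ i : Fin n, v (MvPowerSeries.X i) < 1)
    (hind : ∀ m : Fin n → ℤ, ∏ i, v (MvPowerSeries.X i) ^ m i = 1 → m = 0) :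
    {x : NNReal | ∃ f : MvPowerSeries (Fin n) k, f ≠ 0 ∧ v f = x} =
      (Submonoid.closure (Set.range fun i : Fin n => v (MvPowerSeries.X i)) :
        Submonoid NNReal) := by
  have hinj := Finsupp.injective_prod_pow (fun i => (hpos i).ne') hind
  ext x
  simp only [Set.mem_ofPred_eq, SetLike.mem_coe, Submonoid.mem_closure_range_iff]
  constructor
  · rintro ⟨f, hf, rfl⟩
    exact exists_valuation_eq_prod_pow hle hpos hlt hinj hf
  · rintro ⟨d, rfl⟩
    refine ⟨monomial d 1, fun h => one_ne_zero (α := k) ?_, valuation_monomial hle d one_ne_zero⟩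
    simpa using congrArg (coeff d) h

/-- For a valuation `v ≤ 1` on `k[[x₁,…,xₙ]]` with `0 < v(xᵢ) < 1` multiplicatively
rationally independent, the set of values of nonzero power series is exactly the
multiplicative submonoid of `ℝ≥0` generated by the `v(xᵢ)`. -/
theorem stmt_9 {k : Type*} [Field k] (n : ℕ) (hn : 1 ≤ n)
    (v : Valuation (MvPowerSeries (Fin n) k) NNReal)
    (hle : ∀ f : MvPowerSeries (Fin n) k, v f ≤ 1)
    (hpos : ∀ i : Fin n, 0 < v (MvPowerSeries.X i))
    (hlt : ∀ i : Fin n, v (MvPowerSeries.X i) < 1)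
    (hind : ∀ m : Fin n → ℤ, ∏ i, v (MvPowerSeries.X i) ^ m i = 1 → m = 0) :
    {x : NNReal | ∃ f : MvPowerSeries (Fin n) k, f ≠ 0 ∧ v f = x} =
      (Submonoid.closure (Set.range fun i : Fin n => v (MvPowerSeries.X i)) :
        Submonoid NNReal) :=
  stmt_9_general n v hle hpos hlt hind
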